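/- arXiv:2411.15781 — 4 statements merged into one kernel-verified Lean document; each statement's English description precedes it below -/
import Mathlib

section
/- If α·a·F(N)·(1 − F(N)) > c, then O'(n) > 0 for all n ∈ [N̂, N], O is strictly monotone increasing on [N̂, N], and its unique maximizer on [N̂, N] is n* = N. -/
/-!
Write `F x = σ (a (x - b))` with `σ` the standard sigmoid, so that `O' = α a σ(1 - σ) - c`.
Since `a > 0` and `N̂ > b`, on `[N̂, N]` the sigmoid is evaluated at nonnegative points, where it
takes values in `[1/2, 1)` and increases; as `p ↦ p (1 - p)` decreases on `[1/2, ∞)`, the slope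
`α a σ(1 - σ)` is smallest at `N`, where it exceeds `c` by hypothesis. Hence `O' > 0` on the whole
interval, and `O` is strictly increasing there.
-/

open Real Set

lemma mul_one_sub_le_mul_one_sub {p q : ℝ} (hp : 2⁻¹ ≤ p) (hpq : p ≤ q) :
    q * (1 - q) ≤ p * (1 - p) := by
  nlinarith

namespace Real

lemma two_inv_le_sigmoid {x : ℝ} (hx : 0 ≤ x) : 2⁻¹ ≤ sigmoid x :=
  sigmoid_zero ▸ sigmoid_le hx

lemma antitoneOn_sigmoid_mul_one_sub :
    AntitoneOn (fun x => sigmoid x * (1 - sigmoid x)) (Ici 0) :=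
  fun _ hx _ _ hxy => mul_one_sub_le_mul_one_sub (two_inv_le_sigmoid hx) (sigmoid_le hxy)

lemma hasDerivAt_sigmoid_mul_sub (a b x : ℝ) :
    HasDerivAt (fun x => sigmoid (a * (x - b)))
      (a * (sigmoid (a * (x - b)) * (1 - sigmoid (a * (x - b))))) x := by
  have hinner : HasDerivAt (fun x => a * (x - b)) a x := by
    simpa using ((hasDerivAt_id x).sub_const b).const_mul a
  have hcomp := (hasDerivAt_sigmoid (a * (x - b))).comp x hinner
  rw [mul_comm a]
  exact hcomp

end Real

/-- If `α·a·F(N)·(1 − F(N)) > c`, then `O'(n) > 0` for all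
`n ∈ [N̂, N]`, `O` is strictly monotone increasing on `[N̂, N]`, and its unique
maximizer on `[N̂, N]` is `n* = N`. Here `O(n) = α·F(n) − c·n + Γ`,
`F(x) = 1/(1 + exp(−a·(x − b)))`, `a > 0`, `α > 0`, `b < N̂ < N`. -/
theorem deriv_pos_maximizer_at_N (a b α c Γ Nhat N : ℝ)
    (ha : 0 < a) (hα : 0 < α) (hbN : b < Nhat) (hNN : Nhat < N)
    (F O : ℝ → ℝ)
    (hF : ∀ x, F x = 1 / (1 + Real.exp (-a * (x - b))))
    (hO : ∀ n, O n = α * F n - c * n + Γ)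
    (hc : c < α * a * F N * (1 - F N)) :
    (∀ n ∈ Set.Icc Nhat N, 0 < deriv O n) ∧
      StrictMonoOn O (Set.Icc Nhat N) ∧
      ∀ n ∈ Set.Icc Nhat N, n ≠ N → O n < O N := by
  have hF_eq : F = fun x => sigmoid (a * (x - b)) :=
    funext fun x => by rw [hF, sigmoid_def, one_div, neg_mul]
  have hO' : ∀ x, HasDerivAt O (α * (a * (F x * (1 - F x))) - c) x := fun x => by
    rw [funext hO, hF_eq]
    simpa using (((hasDerivAt_sigmoid_mul_sub a b x).const_mul α).sub
      ((hasDerivAt_id x).const_mul c)).add_const Γ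
  have hslope : ∀ n ∈ Icc Nhat N, 0 < α * (a * (F n * (1 - F n))) - c := by
    rintro n ⟨hn, hnN⟩
    have hle : F N * (1 - F N) ≤ F n * (1 - F n) := by
      rw [hF_eq]
      exact antitoneOn_sigmoid_mul_one_sub (mul_nonneg ha.le (by linarith))
        (mul_nonneg ha.le (by linarith)) (by gcongr)
    nlinarith [mul_pos hα ha]
  have hmono : StrictMonoOn O (Icc Nhat N) :=
    strictMonoOn_of_hasDerivWithinAt_pos (convex_Icc _ _)
      (fun x _ => (hO' x).continuousAt.continuousWithinAt)
      (fun x _ => (hO' x).hasDerivWithinAt) (fun x hx => hslope x (interior_subset hx))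
  exact ⟨fun n hn => (hO' n).deriv ▸ hslope n hn, hmono,
    fun n hn hne => hmono hn (right_mem_Icc.2 hNN.le) (hn.2.lt_of_ne hne)⟩
end

section
/- If α·a·F(N̂)·(1 − F(N̂)) < c, then O'(n) < 0 for all n ∈ [N̂, N], O is strictly monotone decreasing on [N̂, N], and its unique maximizer on [N̂, N] is n* = N̂ (the maximum number of denoising steps is offloaded). -/
/-!
With `F` the logistic function, `O' = α·a·F·(1 − F) − c`. Since `F` is increasing and
`F(b) = 1/2`, on `[b, ∞)` the values of `F` lie in `[1/2, 1)`, where `p ↦ p(1 − p)` decreases;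
hence `O'` is largest at the left endpoint `N̂` of the interval, where it is negative by assumption.
-/

open Real Set

noncomputable def logistic (a b x : ℝ) : ℝ := 1 / (1 + exp (-a * (x - b)))

lemma hasDerivAt_logistic (a b x : ℝ) :
    HasDerivAt (logistic a b) (a * logistic a b x * (1 - logistic a b x)) x := by
  have hinner : HasDerivAt (fun t => 1 + exp (-a * (t - b))) (exp (-a * (x - b)) * -a) x := by
    simpa using (((hasDerivAt_id x).sub_const b).const_mul (-a)).exp.const_add 1
  have hden : 1 + exp (-a * (x - b)) ≠ 0 := by positivity
  have hfun : (fun t => 1 + exp (-a * (t - b)))⁻¹ = logistic a b := by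
    funext t
    simp [logistic]
  refine (hfun ▸ hinner.inv hden).congr_deriv ?_
  simp only [logistic]
  field_simp
  ring

lemma logistic_monotone {a : ℝ} (ha : 0 ≤ a) (b : ℝ) : Monotone (logistic a b) := by
  intro x y hxy
  apply one_div_le_one_div_of_le (by positivity)
  have : -a * (y - b) ≤ -a * (x - b) := by nlinarith
  gcongr

lemma logistic_self (a b : ℝ) : logistic a b b = 1 / 2 := by
  norm_num [logistic]

lemma one_half_le_logistic {a b x : ℝ} (ha : 0 ≤ a) (hx : b ≤ x) : 1 / 2 ≤ logistic a b x :=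
  logistic_self a b ▸ logistic_monotone ha b hx

lemma antitoneOn_mul_one_sub : AntitoneOn (fun p : ℝ => p * (1 - p)) (Ici (1 / 2)) := by
  intro p hp q _ hpq
  simp only [mem_Ici] at hp
  nlinarith

lemma antitoneOn_logistic_mul_one_sub {a : ℝ} (ha : 0 ≤ a) (b : ℝ) :
    AntitoneOn (fun x => logistic a b x * (1 - logistic a b x)) (Ici b) :=
  fun _ hx _ hy hxy =>
    antitoneOn_mul_one_sub (one_half_le_logistic ha hx) (one_half_le_logistic ha hy)
      (logistic_monotone ha b hxy)

theorem deriv_neg_maximizer_at_Nhat_general (a b α c Γ Nhat N : ℝ)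
    (ha : 0 < a) (hα : 0 < α) (hbN : b < Nhat)
    (F O : ℝ → ℝ)
    (hF : ∀ x, F x = 1 / (1 + Real.exp (-a * (x - b))))
    (hO : ∀ n, O n = α * F n - c * n + Γ)
    (hc : α * a * F Nhat * (1 - F Nhat) < c) :
    (∀ n ∈ Set.Icc Nhat N, deriv O n < 0) ∧
      StrictAntiOn O (Set.Icc Nhat N) ∧
      ∀ n ∈ Set.Icc Nhat N, n ≠ Nhat → O n < O Nhat := by
  obtain rfl : F = logistic a b := funext hF
  obtain rfl : O = fun n => α * logistic a b n - c * n + Γ := funext hO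
  have hasDerivAt_O (n : ℝ) : HasDerivAt (fun n => α * logistic a b n - c * n + Γ)
      (α * (a * logistic a b n * (1 - logistic a b n)) - c) n := by
    simpa using (((hasDerivAt_logistic a b n).const_mul α).sub
      ((hasDerivAt_id n).const_mul c)).add_const Γ
  have deriv_neg : ∀ n ∈ Icc Nhat N, deriv (fun n => α * logistic a b n - c * n + Γ) n < 0 := by
    intro n hn
    have hle := antitoneOn_logistic_mul_one_sub ha.le b (mem_Ici.2 hbN.le)
      (mem_Ici.2 (hbN.le.trans hn.1)) hn.1
    rw [(hasDerivAt_O n).deriv]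
    linarith [mul_le_mul_of_nonneg_left hle (mul_pos hα ha).le]
  have anti : StrictAntiOn (fun n => α * logistic a b n - c * n + Γ) (Icc Nhat N) :=
    strictAntiOn_of_deriv_neg (convex_Icc _ _)
      (fun x _ => (hasDerivAt_O x).continuousAt.continuousWithinAt)
      (fun x hx => deriv_neg x (Icc_subset_Icc_left le_rfl (interior_subset hx)))
  exact ⟨deriv_neg, anti, fun n hn hne =>
    anti (left_mem_Icc.2 (hn.1.trans hn.2)) hn (hn.1.lt_of_ne' hne)⟩

/-- If `α·a·F(N̂)·(1 − F(N̂)) < c`, then `O'(n) < 0` for all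
`n ∈ [N̂, N]`, `O` is strictly monotone decreasing on `[N̂, N]`, and its unique
maximizer on `[N̂, N]` is `n* = N̂` (maximum number of denoising steps
offloaded). Here `O(n) = α·F(n) − c·n + Γ`, `F(x) = 1/(1 + exp(−a·(x − b)))`,
`a > 0`, `α > 0`, `b < N̂ < N`. -/
theorem deriv_neg_maximizer_at_Nhat (a b α c Γ Nhat N : ℝ)
    (ha : 0 < a) (hα : 0 < α) (hbN : b < Nhat) (hNN : Nhat < N)
    (F O : ℝ → ℝ)
    (hF : ∀ x, F x = 1 / (1 + Real.exp (-a * (x - b))))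
    (hO : ∀ n, O n = α * F n - c * n + Γ)
    (hc : α * a * F Nhat * (1 - F Nhat) < c) :
    (∀ n ∈ Set.Icc Nhat N, deriv O n < 0) ∧
      StrictAntiOn O (Set.Icc Nhat N) ∧
      ∀ n ∈ Set.Icc Nhat N, n ≠ Nhat → O n < O Nhat :=
  deriv_neg_maximizer_at_Nhat_general a b α c Γ Nhat N ha hα hbN F O hF hO hc
end

section
/- (Remark, personalized trade-off regime) Suppose c > 0, F(N)·(1 − F(N)) > 0, F(N̂)·(1 − F(N̂)) > 0, and c/(a·F(N̂)·(1 − F(N̂))) < α < c/(a·F(N)·(1 − F(N))). Then the unique maximizer n* of O on [N̂, N] lies strictly in the open interval (N̂, N). -/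
/-!
The derivative of `O` is `α a F (1 - F) - c`. Beyond the midpoint `b` of the logistic curve,
`F > 1/2` increases, so `F (1 - F)` strictly decreases and `O'` is strictly antitone on `[N̂, N]`.
The bounds on `α` say exactly that `O'(N̂) > 0 > O'(N)`, so `O'` has a zero `n*` in `(N̂, N)`
(Darboux), and `O` strictly increases up to `n*` and strictly decreases after it.
-/

open Set Real

theorem exists_mem_Ioo_forall_lt_of_strictAntiOn_deriv {f f' : ℝ → ℝ} {p q : ℝ} (hpq : p ≤ q)
    (hf : ∀ x ∈ Icc p q, HasDerivWithinAt f (f' x) (Icc p q) x)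
    (hf' : StrictAntiOn f' (Icc p q)) (hp : 0 < f' p) (hq : f' q < 0) :
    ∃ m ∈ Ioo p q, ∀ x ∈ Icc p q, x ≠ m → f x < f m := by
  obtain ⟨m, hm, hm0⟩ := exists_hasDerivWithinAt_eq_of_lt_of_gt hpq hf hp hq
  have hmIcc : m ∈ Icc p q := Ioo_subset_Icc_self hm
  have hderiv : ∀ {s : Set ℝ}, s ⊆ Ioo p q → ∀ x ∈ s, HasDerivWithinAt f (f' x) s x :=
    fun hs x hx => ((hf x (Ioo_subset_Icc_self (hs hx))).hasDerivAt
      (Icc_mem_nhds (hs hx).1 (hs hx).2)).hasDerivWithinAt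
  have hcont : ∀ {s : Set ℝ}, s ⊆ Icc p q → ContinuousOn f s :=
    fun hs => (HasDerivWithinAt.continuousOn hf).mono hs
  have hup : StrictMonoOn f (Icc p m) := by
    refine strictMonoOn_of_hasDerivWithinAt_pos (f' := f') (convex_Icc p m)
      (hcont (Icc_subset_Icc_right hmIcc.2)) ?_ ?_ <;> rw [interior_Icc]
    · exact hderiv (Ioo_subset_Ioo_right hm.2.le)
    · intro x hx
      exact hm0 ▸ hf' ⟨hx.1.le, hx.2.le.trans hmIcc.2⟩ hmIcc hx.2
  have hdown : StrictAntiOn f (Icc m q) := by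
    refine strictAntiOn_of_hasDerivWithinAt_neg (f' := f') (convex_Icc m q)
      (hcont (Icc_subset_Icc_left hmIcc.1)) ?_ ?_ <;> rw [interior_Icc]
    · exact hderiv (Ioo_subset_Ioo_left hm.1.le)
    · intro x hx
      exact hm0 ▸ hf' hmIcc ⟨hmIcc.1.trans hx.1.le, hx.2.le⟩ hx.1
  refine ⟨m, hm, fun x hx hxm => ?_⟩
  rcases hxm.lt_or_gt with h | h
  · exact hup ⟨hx.1, h.le⟩ ⟨hmIcc.1, le_rfl⟩ h
  · exact hdown ⟨le_rfl, hmIcc.2⟩ ⟨h.le, hx.2⟩ h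

theorem Real.strictAntiOn_sigmoid_mul_one_sub_sigmoid :
    StrictAntiOn (fun x => sigmoid x * (1 - sigmoid x)) (Ici 0) := by
  intro x hx y _ hxy
  have hhalf : 2⁻¹ ≤ sigmoid x := sigmoid_zero ▸ sigmoid_le hx
  have hlt : sigmoid x < sigmoid y := sigmoid_lt hxy
  nlinarith

theorem Real.hasDerivAt_sigmoid_affine (a b x : ℝ) :
    HasDerivAt (fun x => sigmoid (a * (x - b)))
      (a * (sigmoid (a * (x - b)) * (1 - sigmoid (a * (x - b))))) x := by
  have hlin : HasDerivAt (fun x => a * (x - b)) a x := by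
    simpa using ((hasDerivAt_id x).sub_const b).const_mul a
  rw [mul_comm a]
  exact (hasDerivAt_sigmoid (a * (x - b))).comp (h₂ := sigmoid) x hlin

theorem Real.strictAntiOn_sigmoid_affine_mul_one_sub {a : ℝ} (ha : 0 < a) (b : ℝ) :
    StrictAntiOn (fun x => sigmoid (a * (x - b)) * (1 - sigmoid (a * (x - b)))) (Ici b) :=
  strictAntiOn_sigmoid_mul_one_sub_sigmoid.comp_strictMonoOn
    (fun _ _ _ _ hxy => mul_lt_mul_of_pos_left (sub_lt_sub_right hxy b) ha)
    (fun _ hx => mul_nonneg ha.le (sub_nonneg.2 hx))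

theorem tradeoff_regime_interior_maximizer_general (a b α c Γ Nhat N : ℝ)
    (ha : 0 < a) (hα : 0 < α) (hbN : b < Nhat) (hNN : Nhat < N)
    (F O : ℝ → ℝ)
    (hF : ∀ x, F x = 1 / (1 + Real.exp (-a * (x - b))))
    (hO : ∀ n, O n = α * F n - c * n + Γ)
    (hFN : 0 < F N * (1 - F N))
    (hFNhat : 0 < F Nhat * (1 - F Nhat))
    (hα1 : c / (a * F Nhat * (1 - F Nhat)) < α)
    (hα2 : α < c / (a * F N * (1 - F N))) :
    ∃ nstar : ℝ, nstar ∈ Set.Ioo Nhat N ∧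
      ∀ n ∈ Set.Icc Nhat N, n ≠ nstar → O n < O nstar := by
  obtain rfl : F = fun x => sigmoid (a * (x - b)) := funext fun x => by
    rw [hF, sigmoid_def, one_div, neg_mul]
  obtain rfl : O = fun n => α * sigmoid (a * (n - b)) - c * n + Γ := funext hO
  set O' := fun x => α * (a * (sigmoid (a * (x - b)) * (1 - sigmoid (a * (x - b))))) - c
  have hO' : ∀ x, HasDerivAt (fun n => α * sigmoid (a * (n - b)) - c * n + Γ) (O' x) x := fun x =>
    (((hasDerivAt_sigmoid_affine a b x).const_mul α).sub
      ((hasDerivAt_id x).const_mul c)).add_const Γ |>.congr_deriv (by simp [O'])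
  have hO'anti : StrictAntiOn O' (Icc Nhat N) := fun x hx y hy hxy => by
    have := strictAntiOn_sigmoid_affine_mul_one_sub ha b
      (hbN.le.trans hx.1) (hbN.le.trans hy.1) hxy
    simp only [O']
    gcongr
  refine exists_mem_Ioo_forall_lt_of_strictAntiOn_deriv hNN.le
    (fun x _ => (hO' x).hasDerivWithinAt) hO'anti ?_ ?_
  · rw [mul_assoc, div_lt_iff₀ (mul_pos ha hFNhat)] at hα1
    simp only [O']
    linarith
  · rw [mul_assoc, lt_div_iff₀ (mul_pos ha hFN)] at hα2
    simp only [O']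
    linarith

/-- Remark, personalized trade-off regime: Suppose `c > 0`,
`F(N)·(1 − F(N)) > 0`, `F(N̂)·(1 − F(N̂)) > 0`, and
`c/(a·F(N̂)·(1 − F(N̂))) < α < c/(a·F(N)·(1 − F(N)))`. Then the unique
maximizer `n*` of `O` on `[N̂, N]` lies strictly in the open interval
`(N̂, N)`. Here `O(n) = α·F(n) − c·n + Γ`, `F(x) = 1/(1 + exp(−a·(x − b)))`,
`a > 0`, `α > 0`, `b < N̂ < N`. -/
theorem tradeoff_regime_interior_maximizer (a b α c Γ Nhat N : ℝ)
    (ha : 0 < a) (hα : 0 < α) (hbN : b < Nhat) (hNN : Nhat < N)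
    (F O : ℝ → ℝ)
    (hF : ∀ x, F x = 1 / (1 + Real.exp (-a * (x - b))))
    (hO : ∀ n, O n = α * F n - c * n + Γ)
    (hc : 0 < c)
    (hFN : 0 < F N * (1 - F N))
    (hFNhat : 0 < F Nhat * (1 - F Nhat))
    (hα1 : c / (a * F Nhat * (1 - F Nhat)) < α)
    (hα2 : α < c / (a * F N * (1 - F N))) :
    ∃ nstar : ℝ, nstar ∈ Set.Ioo Nhat N ∧
      ∀ n ∈ Set.Icc Nhat N, n ≠ nstar → O n < O nstar :=
  tradeoff_regime_interior_maximizer_general a b α c Γ Nhat N ha hα hbN hNN F O hF hO hFN hFNhat hα1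
    hα2
end

section
/- (Monotone comparative statics in the latency gap) Fix α > 0 and suppose 0 < c₁ < c₂ are both in the interior regime, i.e., α·a·F(N)·(1 − F(N)) < cⱼ < α·a·F(N̂)·(1 − F(N̂)) for j = 1, 2, and let n*₁, n*₂ ∈ (N̂, N) be the corresponding unique solutions of α·a·F(n*ⱼ)·(1 − F(n*ⱼ)) = cⱼ. Then n*₁ > n*₂: a larger gap between the local and edge per-denoising-step latencies yields a strictly smaller optimal split point, i.e., strictly more offloaded denoising steps. -/
/-!
Writing `u = exp (-a (x - b))`, the logistic curve is `F = 1 / (1 + u)` and its slope factor is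
`F (1 - F) = u / (1 + u)²`. On `[b, ∞)` the substitution `u` decreases strictly from `1`, and
`u ↦ u / (1 + u)²` is strictly increasing on `[0, 1]`, so `F (1 - F)` is strictly decreasing
there. The stationarity condition `α a F(n) (1 - F(n)) = c` then forces a larger `c` to be met at
a smaller `n`.
-/

open Real Set

lemma strictMonoOn_div_one_add_sq : StrictMonoOn (fun t : ℝ => t / (1 + t) ^ 2) (Icc 0 1) := by
  rintro s ⟨hs₀, -⟩ t ⟨-, ht₁⟩ hst
  simp only
  rw [div_lt_div_iff₀ (by nlinarith) (by nlinarith)]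
  -- `t (1 + s)² - s (1 + t)² = (t - s) (1 - s t)`
  nlinarith [mul_pos (sub_pos.2 hst) (sub_pos.2 (mul_lt_one_of_nonneg_of_lt_one_left hs₀
    (hst.trans_le ht₁) ht₁))]

lemma logistic_mul_one_sub_logistic (a b x : ℝ) :
    logistic a b x * (1 - logistic a b x) =
      exp (-a * (x - b)) / (1 + exp (-a * (x - b))) ^ 2 := by
  have : 1 + exp (-a * (x - b)) ≠ 0 := by positivity
  rw [logistic]
  field_simp
  ring

lemma strictAnti_exp_neg_mul_sub {a : ℝ} (ha : 0 < a) (b : ℝ) :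
    StrictAnti fun x => exp (-a * (x - b)) := fun _ _ hxy =>
  exp_lt_exp.2 (by nlinarith)

lemma mapsTo_exp_neg_mul_sub_Ici {a : ℝ} (ha : 0 < a) (b : ℝ) :
    MapsTo (fun x => exp (-a * (x - b))) (Ici b) (Icc 0 1) := fun x (hx : b ≤ x) =>
  ⟨(exp_pos _).le, exp_le_one_iff.2 (by nlinarith)⟩

lemma strictAntiOn_logistic_mul_one_sub_logistic {a : ℝ} (ha : 0 < a) (b : ℝ) :
    StrictAntiOn (fun x => logistic a b x * (1 - logistic a b x)) (Ici b) := by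
  simp only [logistic_mul_one_sub_logistic]
  exact strictMonoOn_div_one_add_sq.comp_strictAntiOn
    ((strictAnti_exp_neg_mul_sub ha b).strictAntiOn _) (mapsTo_exp_neg_mul_sub_Ici ha b)

theorem splitpoint_decreasing_in_latency_gap_general (a b α Nhat N c₁ c₂ n₁ n₂ : ℝ)
    (ha : 0 < a) (hα : 0 < α) (hbN : b < Nhat)
    (hclt : c₁ < c₂)
    (F : ℝ → ℝ)
    (hF : ∀ x, F x = 1 / (1 + Real.exp (-a * (x - b))))
    (hn₁ : n₁ ∈ Set.Ioo Nhat N) (hn₂ : n₂ ∈ Set.Ioo Nhat N)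
    (hstat₁ : α * a * F n₁ * (1 - F n₁) = c₁)
    (hstat₂ : α * a * F n₂ * (1 - F n₂) = c₂) :
    n₂ < n₁ := by
  obtain rfl : F = logistic a b := funext hF
  have hslope : logistic a b n₁ * (1 - logistic a b n₁) <
      logistic a b n₂ * (1 - logistic a b n₂) := by
    refine lt_of_mul_lt_mul_left (a := α * a) ?_ (mul_pos hα ha).le
    linarith
  exact (strictAntiOn_logistic_mul_one_sub_logistic ha b).lt_iff_gt
    (hbN.trans hn₁.1).le (hbN.trans hn₂.1).le |>.1 hslope

/-- Monotone comparative statics in the latency gap: Fix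
`α > 0` and suppose `0 < c₁ < c₂` are both in the interior regime, i.e.
`α·a·F(N)·(1 − F(N)) < cⱼ < α·a·F(N̂)·(1 − F(N̂))` for `j = 1, 2`, and let
`n*₁, n*₂ ∈ (N̂, N)` solve `α·a·F(n*ⱼ)·(1 − F(n*ⱼ)) = cⱼ`. Then `n*₁ > n*₂`:
a larger latency gap yields a strictly smaller optimal split point, i.e.
strictly more offloaded denoising steps. Here
`F(x) = 1/(1 + exp(−a·(x − b)))`, `a > 0`, `b < N̂ < N`. -/
theorem splitpoint_decreasing_in_latency_gap (a b α Nhat N c₁ c₂ n₁ n₂ : ℝ)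
    (ha : 0 < a) (hα : 0 < α) (hbN : b < Nhat) (hNN : Nhat < N)
    (hc₁ : 0 < c₁) (hclt : c₁ < c₂)
    (F : ℝ → ℝ)
    (hF : ∀ x, F x = 1 / (1 + Real.exp (-a * (x - b))))
    (hreg₁ : α * a * F N * (1 - F N) < c₁ ∧ c₁ < α * a * F Nhat * (1 - F Nhat))
    (hreg₂ : α * a * F N * (1 - F N) < c₂ ∧ c₂ < α * a * F Nhat * (1 - F Nhat))
    (hn₁ : n₁ ∈ Set.Ioo Nhat N) (hn₂ : n₂ ∈ Set.Ioo Nhat N)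
    (hstat₁ : α * a * F n₁ * (1 - F n₁) = c₁)
    (hstat₂ : α * a * F n₂ * (1 - F n₂) = c₂) :
    n₂ < n₁ :=
  splitpoint_decreasing_in_latency_gap_general a b α Nhat N c₁ c₂ n₁ n₂ ha hα hbN hclt F hF hn₁ hn₂
    hstat₁ hstat₂
end
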